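/- arXiv:2506.04008 — 9 statements merged into one kernel-verified Lean document; each statement's English description precedes it below -/
import Mathlib

section
/- Let (F, G, ◁, ▷) be a matched pair of groups and let f ∈ F. Then the following are equivalent: (1) f⁻¹ ∈ O_f; (2) there exists x ∈ O_f with x⁻¹ ∈ O_f; (3) for every x ∈ O_f one has x⁻¹ ∈ O_f. -/
/-- For a matched pair of groups and `f ∈ F`, with orbit `O_f = {g ▷ f | g ∈ G}`,
the following are equivalent: (1) `f⁻¹ ∈ O_f`; (2) `x⁻¹ ∈ O_f` for some `x ∈ O_f`;
(3) `x⁻¹ ∈ O_f` for all `x ∈ O_f`. -/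
theorem matchedPair_orbit_inv_tfae {F : Type*} {G : Type*} [Group F] [Group G]
    (tri : G → F → F) (coa : G → F → G)
    (h1 : ∀ f : F, tri 1 f = f)
    (h2 : ∀ (g g' : G) (f : F), tri (g * g') f = tri g (tri g' f))
    (h3 : ∀ g : G, coa g 1 = g)
    (h4 : ∀ (g : G) (f f' : F), coa g (f * f') = coa (coa g f) f')
    (h5 : ∀ (g : G) (f f' : F), tri g (f * f') = tri g f * tri (coa g f) f')
    (h6 : ∀ (g g' : G) (f : F), coa (g * g') f = coa g (tri g' f) * coa g' f)
    (f : F) :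
    List.TFAE [f⁻¹ ∈ {x : F | ∃ g : G, tri g f = x},
      ∃ x ∈ {x : F | ∃ g : G, tri g f = x}, x⁻¹ ∈ {x : F | ∃ g : G, tri g f = x},
      ∀ x ∈ {x : F | ∃ g : G, tri g f = x}, x⁻¹ ∈ {x : F | ∃ g : G, tri g f = x}] := by
  have triOne : ∀ g : G, tri g 1 = 1 := by
    intro g
    have h := h5 g 1 1
    rw [one_mul, h3] at h
    have : tri g 1 * 1 = tri g 1 * tri g 1 := by rw [mul_one]; exact h
    exact (mul_left_cancel this).symm
  have triInv : ∀ (g : G) (x : F), tri (coa g x) x⁻¹ = (tri g x)⁻¹ := by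
    intro g x
    have h := h5 g x x⁻¹
    rw [mul_inv_cancel, triOne] at h
    exact (inv_eq_of_mul_eq_one_right h.symm).symm
  tfae_have 1 → 3 := by
    rintro ⟨g₀, hg₀⟩ x ⟨g, hg⟩
    refine ⟨coa g f * g₀, ?_⟩
    rw [h2, hg₀, triInv, hg]
  tfae_have 3 → 2 := by
    intro h
    exact ⟨f, ⟨1, h1 f⟩, h f ⟨1, h1 f⟩⟩
  tfae_have 2 → 1 := by
    rintro ⟨x, ⟨g, hg⟩, ⟨g', hg'⟩⟩
    refine ⟨coa g⁻¹ x * g', ?_⟩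
    have hf : tri g⁻¹ x = f := by rw [← hg, ← h2, inv_mul_cancel, h1]
    rw [h2, hg', triInv, hf]
  tfae_finish
end

section
/- Let (F, G, ◁, ▷) be a matched pair of groups and let f, f' ∈ F. Set O_f O_{f'} = {x y | x ∈ O_f, y ∈ O_{f'}}. Then there exists a subset R of F such that O_f O_{f'} = ⋃_{e ∈ R} O_e and the orbits O_e for e ∈ R are pairwise disjoint. -/
/-- The orbit `O_a = {g ▷ a | g ∈ G}` of `a ∈ F` in a matched pair of groups. -/
def orbitSet {F : Type*} {G : Type*} (tri : G → F → F) (a : F) : Set F :=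
  {x : F | ∃ g : G, tri g a = x}

/-- For a matched pair of groups and `f, f' ∈ F`, the product set `O_f O_{f'}` is a
disjoint union of orbits: there is a subset `R ⊆ F` with
`O_f O_{f'} = ⋃_{e ∈ R} O_e`, the orbits `O_e` for `e ∈ R` being pairwise disjoint. -/
theorem matchedPair_orbit_mul_union {F : Type*} {G : Type*} [Group F] [Group G]
    (tri : G → F → F) (coa : G → F → G)
    (h1 : ∀ f : F, tri 1 f = f)
    (h2 : ∀ (g g' : G) (f : F), tri (g * g') f = tri g (tri g' f))
    (h3 : ∀ g : G, coa g 1 = g)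
    (h4 : ∀ (g : G) (f f' : F), coa g (f * f') = coa (coa g f) f')
    (h5 : ∀ (g : G) (f f' : F), tri g (f * f') = tri g f * tri (coa g f) f')
    (h6 : ∀ (g g' : G) (f : F), coa (g * g') f = coa g (tri g' f) * coa g' f)
    (f f' : F) :
    ∃ R : Set F,
      ({z : F | ∃ x ∈ orbitSet tri f, ∃ y ∈ orbitSet tri f', z = x * y} =
        ⋃ e ∈ R, orbitSet tri e) ∧
      R.PairwiseDisjoint (orbitSet tri) := by
  classical
  -- cancellation: tri g⁻¹ (tri g a) = a
  have hcancel : ∀ (g : G) (a : F), tri g⁻¹ (tri g a) = a := by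
    intro g a
    rw [← h2, inv_mul_cancel, h1]
  -- self membership
  have hself : ∀ a : F, a ∈ orbitSet tri a := fun a => ⟨1, h1 a⟩
  -- intersecting orbits are equal
  have hkey : ∀ a b : F, (orbitSet tri a ∩ orbitSet tri b).Nonempty →
      orbitSet tri a = orbitSet tri b := by
    intro a b ⟨z, ⟨g, hg⟩, ⟨g', hg'⟩⟩
    have hab : a = tri (g⁻¹ * g') b := by
      rw [h2, hg', ← hg, hcancel]
    ext x
    constructor
    · rintro ⟨h, rfl⟩
      exact ⟨h * (g⁻¹ * g'), by rw [h2, ← hab]⟩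
    · rintro ⟨h, rfl⟩
      exact ⟨h * (g⁻¹ * g')⁻¹, by rw [h2, hab, hcancel]⟩
  set S : Set F := {z : F | ∃ x ∈ orbitSet tri f, ∃ y ∈ orbitSet tri f', z = x * y} with hS
  -- S is G-invariant
  have hinv : ∀ (g : G) (z : F), z ∈ S → tri g z ∈ S := by
    rintro g z ⟨x, ⟨gx, hgx⟩, y, ⟨gy, hgy⟩, rfl⟩
    refine ⟨tri g x, ⟨g * gx, by rw [h2, hgx]⟩, tri (coa g x) y,
      ⟨coa g x * gy, by rw [h2, hgy]⟩, h5 g x y⟩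
  have horbsub : ∀ a ∈ S, orbitSet tri a ⊆ S := by
    rintro a ha x ⟨g, rfl⟩
    exact hinv g a ha
  -- setoid by equal orbits
  let s : Setoid F := ⟨fun a b => orbitSet tri a = orbitSet tri b,
    ⟨fun _ => rfl, Eq.symm, Eq.trans⟩⟩
  let rep : F → F := fun a => (Quotient.mk s a).out
  have hrep : ∀ a, orbitSet tri (rep a) = orbitSet tri a := by
    intro a
    have : s.r ((Quotient.mk s a).out) a := Quotient.exact (Quotient.out_eq _)
    exact this
  refine ⟨rep '' S, ?_, ?_⟩
  · ext z
    simp only [Set.mem_iUnion]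
    constructor
    · intro hz
      exact ⟨rep z, ⟨z, hz, rfl⟩, by rw [hrep]; exact hself z⟩
    · rintro ⟨e, ⟨a, ha, rfl⟩, hz⟩
      rw [hrep] at hz
      exact horbsub a ha hz
  · rintro e ⟨a, _, rfl⟩ e' ⟨b, _, rfl⟩ hne
    simp only [Function.onFun]
    rw [Set.disjoint_left]
    intro x hx hx'
    apply hne
    have heq : orbitSet tri (rep a) = orbitSet tri (rep b) :=
      hkey _ _ ⟨x, hx, hx'⟩
    rw [hrep, hrep] at heq
    have : Quotient.mk s a = Quotient.mk s b := Quotient.sound heq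
    show (Quotient.mk s a).out = (Quotient.mk s b).out
    rw [this]
end

section
/- Let (F, G, ◁, ▷) be a matched pair of groups, let k be a field, let σ : G × F × F → kˣ be a normalized cocycle and τ : G × G × F → kˣ a normalized co-cocycle, and assume σ and τ satisfy the compatibility condition. Then for all x ∈ G and y ∈ F one has 1 = σ(x⁻¹; x ▷ y, (x ▷ y)⁻¹) · σ(x; y, y⁻¹) · τ(x⁻¹, x; y) · τ((x ◁ y)⁻¹, x ◁ y; y⁻¹). -/
/-- For a matched pair of groups with compatible normalized cocycle `σ` and
co-cocycle `τ`, one has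
`1 = σ(x⁻¹; x ▷ y, (x ▷ y)⁻¹) σ(x; y, y⁻¹) τ(x⁻¹, x; y) τ((x ◁ y)⁻¹, x ◁ y; y⁻¹)`. -/
theorem matchedPair_compat_identity {k : Type*} [Field k] {F : Type*} {G : Type*}
    [Group F] [Group G]
    (tri : G → F → F) (coa : G → F → G)
    (h1 : ∀ f : F, tri 1 f = f)
    (h2 : ∀ (g g' : G) (f : F), tri (g * g') f = tri g (tri g' f))
    (h3 : ∀ g : G, coa g 1 = g)
    (h4 : ∀ (g : G) (f f' : F), coa g (f * f') = coa (coa g f) f')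
    (h5 : ∀ (g : G) (f f' : F), tri g (f * f') = tri g f * tri (coa g f) f')
    (h6 : ∀ (g g' : G) (f : F), coa (g * g') f = coa g (tri g' f) * coa g' f)
    (σ : G → F → F → kˣ)
    (hσ1 : ∀ (g : G) (f : F), σ g 1 f = 1)
    (hσ2 : ∀ (g : G) (f : F), σ g f 1 = 1)
    (hσ3 : ∀ f f' : F, σ 1 f f' = 1)
    (hσ4 : ∀ (g : G) (f f' f'' : F),
      σ (coa g f) f' f'' * σ g f (f' * f'') = σ g f f' * σ g (f * f') f'')
    (τ : G → G → F → kˣ)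
    (hτ1 : ∀ (g : G) (f : F), τ 1 g f = 1)
    (hτ2 : ∀ (g : G) (f : F), τ g 1 f = 1)
    (hτ3 : ∀ g g' : G, τ g g' 1 = 1)
    (hτ4 : ∀ (g g' g'' : G) (f : F),
      τ g g' (tri g'' f) * τ (g * g') g'' f = τ g (g' * g'') f * τ g' g'' f)
    (hcomp : ∀ (g g' : G) (f f' : F),
      σ (g * g') f f' * τ g g' (f * f') =
        σ g (tri g' f) (tri (coa g' f) f') * σ g' f f' * τ g g' f *
          τ (coa g (tri g' f)) (coa g' f) f') :
    ∀ (x : G) (y : F),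
      1 = σ x⁻¹ (tri x y) (tri x y)⁻¹ * σ x y y⁻¹ * τ x⁻¹ x y *
        τ (coa x y)⁻¹ (coa x y) y⁻¹ := by
  have htri1 : ∀ g : G, tri g 1 = 1 := by
    intro g
    have := h5 g 1 1
    simpa [h3] using this
  have hcoa1 : ∀ f : F, coa 1 f = 1 := by
    intro f
    have := h6 1 1 f
    simpa [h1] using this
  intro x y
  have hinvtri : tri (coa x y) y⁻¹ = (tri x y)⁻¹ := by
    have := h5 x y y⁻¹
    simp [htri1] at this
    exact eq_inv_of_mul_eq_one_right this.symm
  have hinvcoa : coa x⁻¹ (tri x y) = (coa x y)⁻¹ := by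
    have := h6 x⁻¹ x y
    simp [hcoa1] at this
    exact eq_inv_of_mul_eq_one_left this.symm
  have key := hcomp x⁻¹ x y y⁻¹
  rw [inv_mul_cancel, mul_inv_cancel, hσ3, hτ3, hinvcoa] at key
  have : tri (coa x y) y⁻¹ = (tri x y)⁻¹ := hinvtri
  rw [this] at key
  simpa using key
end

section
/- Let (F, G, ◁, ▷) be a matched pair of groups, let k be a field, let σ : G × F × F → kˣ be a normalized cocycle and τ : G × G × F → kˣ a normalized co-cocycle, and assume σ and τ satisfy the compatibility condition. Then for all x ∈ G and y ∈ F one has σ(x⁻¹; x ▷ y, (x ▷ y)⁻¹)⁻¹ · τ(x⁻¹, x; y)⁻¹ · σ(x ◁ y; y⁻¹, y)⁻¹ · τ(x ◁ y, (x ◁ y)⁻¹; (x ▷ y)⁻¹)⁻¹ = 1. (This says the square of the antipode of the Hopf algebra k^G{}^τ#_σ kF is the identity.) -/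
/-- For a matched pair of groups with compatible normalized cocycle `σ` and
co-cocycle `τ`, one has
`σ(x⁻¹; x ▷ y, (x ▷ y)⁻¹)⁻¹ τ(x⁻¹, x; y)⁻¹ σ(x ◁ y; y⁻¹, y)⁻¹ τ(x ◁ y, (x ◁ y)⁻¹; (x ▷ y)⁻¹)⁻¹ = 1`,
i.e. the square of the antipode of `k^G{}^τ#_σ kF` is the identity. -/
theorem matchedPair_antipode_square {k : Type*} [Field k] {F : Type*} {G : Type*}
    [Group F] [Group G]
    (tri : G → F → F) (coa : G → F → G)
    (h1 : ∀ f : F, tri 1 f = f)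
    (h2 : ∀ (g g' : G) (f : F), tri (g * g') f = tri g (tri g' f))
    (h3 : ∀ g : G, coa g 1 = g)
    (h4 : ∀ (g : G) (f f' : F), coa g (f * f') = coa (coa g f) f')
    (h5 : ∀ (g : G) (f f' : F), tri g (f * f') = tri g f * tri (coa g f) f')
    (h6 : ∀ (g g' : G) (f : F), coa (g * g') f = coa g (tri g' f) * coa g' f)
    (σ : G → F → F → kˣ)
    (hσ1 : ∀ (g : G) (f : F), σ g 1 f = 1)
    (hσ2 : ∀ (g : G) (f : F), σ g f 1 = 1)
    (hσ3 : ∀ f f' : F, σ 1 f f' = 1)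
    (hσ4 : ∀ (g : G) (f f' f'' : F),
      σ (coa g f) f' f'' * σ g f (f' * f'') = σ g f f' * σ g (f * f') f'')
    (τ : G → G → F → kˣ)
    (hτ1 : ∀ (g : G) (f : F), τ 1 g f = 1)
    (hτ2 : ∀ (g : G) (f : F), τ g 1 f = 1)
    (hτ3 : ∀ g g' : G, τ g g' 1 = 1)
    (hτ4 : ∀ (g g' g'' : G) (f : F),
      τ g g' (tri g'' f) * τ (g * g') g'' f = τ g (g' * g'') f * τ g' g'' f)
    (hcomp : ∀ (g g' : G) (f f' : F),
      σ (g * g') f f' * τ g g' (f * f') =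
        σ g (tri g' f) (tri (coa g' f) f') * σ g' f f' * τ g g' f *
          τ (coa g (tri g' f)) (coa g' f) f') :
    ∀ (x : G) (y : F),
      (σ x⁻¹ (tri x y) (tri x y)⁻¹)⁻¹ * (τ x⁻¹ x y)⁻¹ * (σ (coa x y) y⁻¹ y)⁻¹ *
        (τ (coa x y) (coa x y)⁻¹ (tri x y)⁻¹)⁻¹ = 1 := by
  intro x y
  have triOne : ∀ g : G, tri g 1 = 1 := fun g => by
    have h := h5 g 1 1
    rw [h3, one_mul] at h
    have h' : tri g 1 * 1 = tri g 1 * tri g 1 := by rw [mul_one]; exact h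
    exact (mul_left_cancel h').symm
  have coaOne : ∀ f : F, coa 1 f = 1 := fun f => by
    have h := h6 1 1 f
    rw [h1, one_mul] at h
    have h' : coa 1 f * 1 = coa 1 f * coa 1 f := by rw [mul_one]; exact h
    exact (mul_left_cancel h').symm
  have e1 : tri (coa x y) y⁻¹ = (tri x y)⁻¹ := by
    have h := h5 x y y⁻¹
    rw [mul_inv_cancel, triOne] at h
    exact (inv_eq_of_mul_eq_one_right h.symm).symm
  have e2 : coa x⁻¹ (tri x y) = (coa x y)⁻¹ := by
    have h := h6 x⁻¹ x y
    rw [inv_mul_cancel, coaOne] at h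
    exact eq_inv_of_mul_eq_one_left h.symm
  have e3 : σ (coa x y) y⁻¹ y = σ x y y⁻¹ := by
    have h := hσ4 x y y⁻¹ y
    rw [inv_mul_cancel, mul_inv_cancel, hσ2, hσ1, mul_one, mul_one] at h
    exact h
  have e4 : τ (coa x y) (coa x y)⁻¹ (tri x y)⁻¹ = τ (coa x y)⁻¹ (coa x y) y⁻¹ := by
    have h := hτ4 (coa x y) (coa x y)⁻¹ (coa x y) y⁻¹
    rw [e1, mul_inv_cancel, inv_mul_cancel, hτ1, hτ2, mul_one, one_mul] at h
    exact h
  have key := hcomp x⁻¹ x y y⁻¹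
  rw [inv_mul_cancel, mul_inv_cancel, hσ3, hτ3, one_mul, e1, e2] at key
  have trix : tri x⁻¹ (tri x y) = y := by rw [← h2, inv_mul_cancel, h1]
  have final : σ x⁻¹ (tri x y) (tri x y)⁻¹ * τ x⁻¹ x y * σ (coa x y) y⁻¹ y *
      τ (coa x y) (coa x y)⁻¹ (tri x y)⁻¹ = 1 := by
    rw [e3, e4]
    calc σ x⁻¹ (tri x y) (tri x y)⁻¹ * τ x⁻¹ x y * σ x y y⁻¹ * τ (coa x y)⁻¹ (coa x y) y⁻¹
        = σ x⁻¹ (tri x y) (tri x y)⁻¹ * σ x y y⁻¹ * τ x⁻¹ x y *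
          τ (coa x y)⁻¹ (coa x y) y⁻¹ := by
          rw [mul_assoc (σ x⁻¹ (tri x y) (tri x y)⁻¹), mul_comm (τ x⁻¹ x y),
            ← mul_assoc]
      _ = 1 := key.symm
  rw [← mul_inv, ← mul_inv, ← mul_inv, final, inv_one]
end

section
/- Let (F, G, ◁, ▷) be a matched pair of groups and let f ∈ F. Then the map g ↦ g ◁ f is a bijection from the stabilizer G_f = {g ∈ G | g ▷ f = f} onto the stabilizer G_{f⁻¹} = {g ∈ G | g ▷ f⁻¹ = f⁻¹}. -/
/-- In a matched pair of groups, the map `g ↦ g ◁ f` is a bijection from the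
stabilizer `G_f = {g | g ▷ f = f}` onto the stabilizer `G_{f⁻¹}`. -/
theorem matchedPair_stabilizer_bijOn {F : Type*} {G : Type*} [Group F] [Group G]
    (tri : G → F → F) (coa : G → F → G)
    (h1 : ∀ f : F, tri 1 f = f)
    (h2 : ∀ (g g' : G) (f : F), tri (g * g') f = tri g (tri g' f))
    (h3 : ∀ g : G, coa g 1 = g)
    (h4 : ∀ (g : G) (f f' : F), coa g (f * f') = coa (coa g f) f')
    (h5 : ∀ (g : G) (f f' : F), tri g (f * f') = tri g f * tri (coa g f) f')
    (h6 : ∀ (g g' : G) (f : F), coa (g * g') f = coa g (tri g' f) * coa g' f)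
    (f : F) :
    Set.BijOn (fun g => coa g f) {g : G | tri g f = f} {g : G | tri g f⁻¹ = f⁻¹} := by
  have htri1 : ∀ g : G, tri g 1 = 1 := by
    intro g
    have h := h5 g 1 1
    rw [h3] at h
    exact mul_left_cancel (a := tri g 1) (by simpa using h.symm)
  have key : ∀ (g : G) (a : F), tri g a = a → tri (coa g a) a⁻¹ = a⁻¹ := by
    intro g a ha
    have h := h5 g a a⁻¹
    rw [mul_inv_cancel, htri1, ha] at h
    exact (eq_inv_of_mul_eq_one_right h.symm)
  have hinv : ∀ (g : G) (a : F), coa (coa g a) a⁻¹ = g := by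
    intro g a
    rw [← h4, mul_inv_cancel, h3]
  have hm1 : Set.MapsTo (fun g => coa g f) {g : G | tri g f = f}
      {g : G | tri g f⁻¹ = f⁻¹} := fun g hg => key g f hg
  have hm2 : Set.MapsTo (fun g => coa g f⁻¹) {g : G | tri g f⁻¹ = f⁻¹}
      {g : G | tri g f = f} := fun g hg => by simpa using key g f⁻¹ hg
  have hIO : Set.InvOn (fun g => coa g f⁻¹) (fun g => coa g f)
      {g : G | tri g f = f} {g : G | tri g f⁻¹ = f⁻¹} :=
    ⟨fun g _ => hinv g f, fun g _ => by simpa using hinv g f⁻¹⟩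
  exact hIO.bijOn hm1 hm2
end

section
/- Let (F, G, ◁, ▷) be a matched pair of groups, let f ∈ F, and let g ∈ G satisfy g ▷ f = f. Then for every z ∈ G one has (z⁻¹ g z) ◁ (z⁻¹ ▷ f) = (z⁻¹ ◁ f)(g ◁ f)(z⁻¹ ◁ f)⁻¹. -/
/-- In a matched pair of groups, if `g ▷ f = f` then for all `z ∈ G`,
`(z⁻¹ g z) ◁ (z⁻¹ ▷ f) = (z⁻¹ ◁ f)(g ◁ f)(z⁻¹ ◁ f)⁻¹`. -/
theorem matchedPair_conj_coact {F : Type*} {G : Type*} [Group F] [Group G]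
    (tri : G → F → F) (coa : G → F → G)
    (h1 : ∀ f : F, tri 1 f = f)
    (h2 : ∀ (g g' : G) (f : F), tri (g * g') f = tri g (tri g' f))
    (h3 : ∀ g : G, coa g 1 = g)
    (h4 : ∀ (g : G) (f f' : F), coa g (f * f') = coa (coa g f) f')
    (h5 : ∀ (g : G) (f f' : F), tri g (f * f') = tri g f * tri (coa g f) f')
    (h6 : ∀ (g g' : G) (f : F), coa (g * g') f = coa g (tri g' f) * coa g' f)
    (f : F) (g : G) (hg : tri g f = f) :
    ∀ z : G, coa (z⁻¹ * g * z) (tri z⁻¹ f) =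
      coa z⁻¹ f * coa g f * (coa z⁻¹ f)⁻¹ := by
  intro z
  have key : coa (z⁻¹ * g * z) (tri z⁻¹ f) * coa z⁻¹ f = coa z⁻¹ f * coa g f := by
    rw [← h6]
    have hz : z⁻¹ * g * z * z⁻¹ = z⁻¹ * g := by group
    rw [hz, h6, hg]
  exact eq_mul_inv_of_mul_eq key
end

section
/- Let (F, G, ◁, ▷) be a matched pair of groups and let f ∈ F. Then the map x ↦ x⁻¹ is a bijection from the orbit O_f = {g ▷ f | g ∈ G} onto the orbit O_{f⁻¹} = {g ▷ f⁻¹ | g ∈ G}. In particular, O_f and O_{f⁻¹} have the same cardinality. -/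
/-- In a matched pair of groups, `x ↦ x⁻¹` is a bijection from `O_f` onto `O_{f⁻¹}`;
in particular the two orbits have the same cardinality. -/
theorem matchedPair_orbit_inv_bijOn {F : Type*} {G : Type*} [Group F] [Group G]
    (tri : G → F → F) (coa : G → F → G)
    (h1 : ∀ f : F, tri 1 f = f)
    (h2 : ∀ (g g' : G) (f : F), tri (g * g') f = tri g (tri g' f))
    (h3 : ∀ g : G, coa g 1 = g)
    (h4 : ∀ (g : G) (f f' : F), coa g (f * f') = coa (coa g f) f')
    (h5 : ∀ (g : G) (f f' : F), tri g (f * f') = tri g f * tri (coa g f) f')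
    (h6 : ∀ (g g' : G) (f : F), coa (g * g') f = coa g (tri g' f) * coa g' f)
    (f : F) :
    Set.BijOn (fun x => x⁻¹) (orbitSet tri f) (orbitSet tri f⁻¹) ∧
      Nat.card (orbitSet tri f) = Nat.card (orbitSet tri f⁻¹) := by
  -- g ▷ 1 = 1
  have hone : ∀ g : G, tri g 1 = 1 := by
    intro g
    have h := h5 g 1 1
    rw [one_mul, h3] at h
    have h' : tri g 1 = 1 := by
      have := left_eq_mul.mp h
      exact this
    exact h'
  -- (g ▷ f)⁻¹ = (g ◁ f) ▷ f⁻¹, for any f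
  have hinv : ∀ (g : G) (a : F), (tri g a)⁻¹ = tri (coa g a) a⁻¹ := by
    intro g a
    have := h5 g a a⁻¹
    rw [mul_inv_cancel, hone] at this
    exact (eq_inv_of_mul_eq_one_right this.symm).symm
  have hbij : Set.BijOn (fun x => x⁻¹) (orbitSet tri f) (orbitSet tri f⁻¹) := by
    refine ⟨?_, ?_, ?_⟩
    · rintro x ⟨g, rfl⟩
      exact ⟨coa g f, (hinv g f).symm⟩
    · intro x _ y _ h
      exact inv_injective h
    · rintro x ⟨g, rfl⟩
      refine ⟨(tri g f⁻¹)⁻¹, ⟨coa g f⁻¹, ?_⟩, inv_inv _⟩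
      rw [hinv g f⁻¹, inv_inv]
  exact ⟨hbij, Nat.card_congr (Set.BijOn.equiv _ hbij)⟩
end

section
/- Let k be a field, let (F, G, ◁, ▷) be a matched pair of groups with G finite, and let σ : G × F × F → kˣ be a normalized cocycle. Let A be the free k-module with basis {p_g # f | g ∈ G, f ∈ F} (i.e. finitely supported functions on G × F), with bilinear multiplication determined by (p_g # f)(p_{g'} # f') = δ_{g ◁ f, g'} σ(g; f, f') (p_g # f f'), where δ is the Kronecker delta. Then this multiplication is associative, and the element Σ_{g ∈ G} p_g # 1_F is a two-sided unit for it; hence A is an associative unital k-algebra. -/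
/-!
Both sides of the associativity and unit laws are additive in each argument, so it suffices to
check them on basis elements. For `(p_g # f)(p_{g'} # f')(p_{g''} # f'')` both bracketings
vanish unless `g ◁ f = g'` and `g' ◁ f' = g''` (the left one a priori needs `g ◁ f f' = g''`
instead, which is equivalent since `◁` is a right action), and the coefficients then agree by
the cocycle identity. The unit laws come from `g ◁ 1 = g` and the normalization of `σ`.
-/

/-- The crossed product multiplication on the free `k`-module with basis
`{p_g # f | g ∈ G, f ∈ F}` (realized as finitely supported functions on `G × F`):
`(p_g # f)(p_{g'} # f') = δ_{g ◁ f, g'} σ(g; f, f') (p_g # f f')`. -/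
noncomputable def cpMul {k F G : Type*} [Field k] [Group F] [Group G] [DecidableEq G]
    (coa : G → F → G) (σ : G → F → F → kˣ)
    (a b : (G × F) →₀ k) : (G × F) →₀ k :=
  a.sum fun p c => b.sum fun q d =>
    if coa p.1 p.2 = q.1 then
      Finsupp.single (p.1, p.2 * q.2) (c * d * (σ p.1 p.2 q.2 : k))
    else 0

/-- The element `Σ_{g ∈ G} p_g # 1_F`. -/
noncomputable def cpOne {k F G : Type*} [Field k] [One F] [Fintype G] : (G × F) →₀ k :=
  ∑ g : G, Finsupp.single (g, (1 : F)) (1 : k)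

section CrossedProduct

variable {k F G : Type*} [Field k] [Group F] [Group G] [DecidableEq G]
  (coa : G → F → G) (σ : G → F → F → kˣ)

theorem cpMul_single_single (p q : G × F) (c d : k) :
    cpMul coa σ (Finsupp.single p c) (Finsupp.single q d) =
      if coa p.1 p.2 = q.1 then
        Finsupp.single (p.1, p.2 * q.2) (c * d * (σ p.1 p.2 q.2 : k)) else 0 := by
  rw [cpMul, Finsupp.sum_single_index (by simp), Finsupp.sum_single_index (by simp)]

theorem cpMul_add_left (a a' b : (G × F) →₀ k) :
    cpMul coa σ (a + a') b = cpMul coa σ a b + cpMul coa σ a' b := by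
  refine Finsupp.sum_add_index' (fun p => by simp) fun p c c' => ?_
  rw [← Finsupp.sum_add]
  refine Finsupp.sum_congr fun q _ => ?_
  split_ifs
  · rw [add_mul, add_mul, Finsupp.single_add]
  · rw [add_zero]

theorem cpMul_add_right (a b b' : (G × F) →₀ k) :
    cpMul coa σ a (b + b') = cpMul coa σ a b + cpMul coa σ a b' := by
  rw [cpMul, cpMul, cpMul, ← Finsupp.sum_add]
  refine Finsupp.sum_congr fun p _ => Finsupp.sum_add_index' (fun q => by simp) fun q d d' => ?_
  split_ifs
  · rw [mul_add, add_mul, Finsupp.single_add]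
  · rw [add_zero]

noncomputable def cpMulRight (b : (G × F) →₀ k) : ((G × F) →₀ k) →+ ((G × F) →₀ k) :=
  AddMonoidHom.mk' (cpMul coa σ · b) fun a a' => cpMul_add_left coa σ a a' b

noncomputable def cpMulLeft (a : (G × F) →₀ k) : ((G × F) →₀ k) →+ ((G × F) →₀ k) :=
  AddMonoidHom.mk' (cpMul coa σ a) (cpMul_add_right coa σ a)

theorem cpMul_zero_left (b : (G × F) →₀ k) : cpMul coa σ 0 b = 0 :=
  map_zero (cpMulRight coa σ b)

theorem cpMul_zero_right (a : (G × F) →₀ k) : cpMul coa σ a 0 = 0 :=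
  map_zero (cpMulLeft coa σ a)

theorem cpMul_sum_left {ι : Type*} (s : Finset ι) (f : ι → (G × F) →₀ k) (b : (G × F) →₀ k) :
    cpMul coa σ (∑ i ∈ s, f i) b = ∑ i ∈ s, cpMul coa σ (f i) b :=
  map_sum (cpMulRight coa σ b) f s

theorem cpMul_sum_right {ι : Type*} (s : Finset ι) (a : (G × F) →₀ k) (f : ι → (G × F) →₀ k) :
    cpMul coa σ a (∑ i ∈ s, f i) = ∑ i ∈ s, cpMul coa σ a (f i) :=
  map_sum (cpMulLeft coa σ a) f s

theorem cpMul_single_assoc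
    (h4 : ∀ (g : G) (f f' : F), coa g (f * f') = coa (coa g f) f')
    (hσ4 : ∀ (g : G) (f f' f'' : F),
      σ (coa g f) f' f'' * σ g f (f' * f'') = σ g f f' * σ g (f * f') f'')
    (p q r : G × F) (cp cq cr : k) :
    cpMul coa σ (cpMul coa σ (Finsupp.single p cp) (Finsupp.single q cq)) (Finsupp.single r cr) =
      cpMul coa σ (Finsupp.single p cp) (cpMul coa σ (Finsupp.single q cq) (Finsupp.single r cr)) := by
  by_cases hpq : coa p.1 p.2 = q.1
  · have hcocycle := congrArg Units.val (hσ4 p.1 p.2 q.2 r.2)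
    rw [hpq] at hcocycle
    push_cast at hcocycle
    by_cases hqr : coa q.1 q.2 = r.1
    · simp only [cpMul_single_single, hpq, hqr, h4, if_true, mul_assoc]
      congr 1
      linear_combination -(cp * cq * cr) * hcocycle
    · simp only [cpMul_single_single, hpq, hqr, h4, if_true, if_false, cpMul_zero_right]
  · simp only [cpMul_single_single, hpq, if_false, cpMul_zero_left]
    split_ifs <;> simp only [cpMul_single_single, hpq, if_false, cpMul_zero_right]

theorem cpMul_assoc
    (h4 : ∀ (g : G) (f f' : F), coa g (f * f') = coa (coa g f) f')
    (hσ4 : ∀ (g : G) (f f' f'' : F),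
      σ (coa g f) f' f'' * σ g f (f' * f'') = σ g f f' * σ g (f * f') f'')
    (a b c : (G × F) →₀ k) :
    cpMul coa σ (cpMul coa σ a b) c = cpMul coa σ a (cpMul coa σ b c) := by
  induction a using Finsupp.induction_linear with
  | zero => simp only [cpMul_zero_left]
  | add a a' ha ha' => simp only [cpMul_add_left, ha, ha']
  | single p cp =>
  induction b using Finsupp.induction_linear with
  | zero => simp only [cpMul_zero_left, cpMul_zero_right]
  | add b b' hb hb' => simp only [cpMul_add_left, cpMul_add_right, hb, hb']
  | single q cq =>
  induction c using Finsupp.induction_linear with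
  | zero => simp only [cpMul_zero_right]
  | add c c' hc hc' => simp only [cpMul_add_right, hc, hc']
  | single r cr => exact cpMul_single_assoc coa σ h4 hσ4 p q r cp cq cr

variable [Fintype G]

theorem cpOne_cpMul (h3 : ∀ g : G, coa g 1 = g) (hσ1 : ∀ (g : G) (f : F), σ g 1 f = 1)
    (a : (G × F) →₀ k) : cpMul coa σ cpOne a = a := by
  induction a using Finsupp.induction_linear with
  | zero => exact cpMul_zero_right coa σ _
  | add a a' ha ha' => rw [cpMul_add_right, ha, ha']
  | single q d => simp [cpOne, cpMul_sum_left, cpMul_single_single, h3, hσ1]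

theorem cpMul_cpOne (hσ2 : ∀ (g : G) (f : F), σ g f 1 = 1) (a : (G × F) →₀ k) :
    cpMul coa σ a cpOne = a := by
  induction a using Finsupp.induction_linear with
  | zero => exact cpMul_zero_left coa σ _
  | add a a' ha ha' => rw [cpMul_add_left, ha, ha']
  | single q d => simp [cpOne, cpMul_sum_right, cpMul_single_single, hσ2]

end CrossedProduct

theorem crossedProduct_assoc_one_general {k : Type*} [Field k] {F : Type*} {G : Type*}
    [Group F] [Group G] [Fintype G] [DecidableEq G]
    (coa : G → F → G)
    (h3 : ∀ g : G, coa g 1 = g)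
    (h4 : ∀ (g : G) (f f' : F), coa g (f * f') = coa (coa g f) f')
    (σ : G → F → F → kˣ)
    (hσ1 : ∀ (g : G) (f : F), σ g 1 f = 1)
    (hσ2 : ∀ (g : G) (f : F), σ g f 1 = 1)
    (hσ4 : ∀ (g : G) (f f' f'' : F),
      σ (coa g f) f' f'' * σ g f (f' * f'') = σ g f f' * σ g (f * f') f'') :
    (∀ a b c : (G × F) →₀ k,
      cpMul coa σ (cpMul coa σ a b) c = cpMul coa σ a (cpMul coa σ b c)) ∧
    (∀ a : (G × F) →₀ k,
      cpMul coa σ (cpOne : (G × F) →₀ k) a = a ∧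
        cpMul coa σ a (cpOne : (G × F) →₀ k) = a) :=
  ⟨cpMul_assoc coa σ h4 hσ4, fun a => ⟨cpOne_cpMul coa σ h3 hσ1 a, cpMul_cpOne coa σ hσ2 a⟩⟩

/-- For a matched pair of groups with `G` finite and a normalized cocycle `σ`, the
crossed product multiplication on the free `k`-module with basis
`{p_g # f | g ∈ G, f ∈ F}` is associative and `Σ_{g ∈ G} p_g # 1_F` is a two-sided
unit, so it is an associative unital `k`-algebra. -/
theorem crossedProduct_assoc_one {k : Type*} [Field k] {F : Type*} {G : Type*}
    [Group F] [Group G] [Fintype G] [DecidableEq G]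
    (tri : G → F → F) (coa : G → F → G)
    (h1 : ∀ f : F, tri 1 f = f)
    (h2 : ∀ (g g' : G) (f : F), tri (g * g') f = tri g (tri g' f))
    (h3 : ∀ g : G, coa g 1 = g)
    (h4 : ∀ (g : G) (f f' : F), coa g (f * f') = coa (coa g f) f')
    (h5 : ∀ (g : G) (f f' : F), tri g (f * f') = tri g f * tri (coa g f) f')
    (h6 : ∀ (g g' : G) (f : F), coa (g * g') f = coa g (tri g' f) * coa g' f)
    (σ : G → F → F → kˣ)
    (hσ1 : ∀ (g : G) (f : F), σ g 1 f = 1)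
    (hσ2 : ∀ (g : G) (f : F), σ g f 1 = 1)
    (hσ3 : ∀ f f' : F, σ 1 f f' = 1)
    (hσ4 : ∀ (g : G) (f f' f'' : F),
      σ (coa g f) f' f'' * σ g f (f' * f'') = σ g f f' * σ g (f * f') f'') :
    (∀ a b c : (G × F) →₀ k,
      cpMul coa σ (cpMul coa σ a b) c = cpMul coa σ a (cpMul coa σ b c)) ∧
    (∀ a : (G × F) →₀ k,
      cpMul coa σ (cpOne : (G × F) →₀ k) a = a ∧
        cpMul coa σ a (cpOne : (G × F) →₀ k) = a) :=
  crossedProduct_assoc_one_general coa h3 h4 σ hσ1 hσ2 hσ4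
end

section
/- Let k be a field of characteristic 0, let (F, G, ◁, ▷) be a matched pair of groups with G finite, and let τ : G × G × F → kˣ be a normalized co-cocycle. Let A be the free k-module with basis {p_g # f | g ∈ G, f ∈ F} and define the k-linear functional T : A → k by T(p_g # f) = δ_{f, 1_F} / |G|. Then T is a left integral with respect to the crossed coproduct, i.e. for all g ∈ G and f ∈ F one has Σ_{x ∈ G} τ(g x⁻¹, x; f) · T(p_x # f) · (p_{g x⁻¹} # (x ▷ f)) = T(p_g # f) · Σ_{y ∈ G} p_y # 1_F in A; moreover T(Σ_{y ∈ G} p_y # 1_F) = 1. -/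
/-- The `k`-linear functional `T` with `T(p_g # f) = δ_{f, 1_F} / |G|`. -/
noncomputable def cpT {k F G : Type*} [Field k] [One F] [Fintype G]
    [DecidableEq F] (a : (G × F) →₀ k) : k :=
  a.sum fun p c => if p.2 = 1 then c / (Fintype.card G : k) else 0

lemma cpT_single {k F G : Type*} [Field k] [One F] [Fintype G] [DecidableEq F]
    (p : G × F) (c : k) :
    cpT (Finsupp.single p c) = if p.2 = 1 then c / (Fintype.card G : k) else 0 := by
  unfold cpT
  rw [Finsupp.sum_single_index]
  simp

/-- For a matched pair of groups with `G` finite over a field `k` of characteristic 0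
and a normalized co-cocycle `τ`, the functional `T(p_g # f) = δ_{f, 1_F}/|G|` is a
left integral with respect to the crossed coproduct
`Δ(p_g # f) = Σ_{x ∈ G} τ(g x⁻¹, x; f)(p_{g x⁻¹} # (x ▷ f)) ⊗ (p_x # f)`,
and `T(Σ_{y ∈ G} p_y # 1_F) = 1`. -/
theorem crossedProduct_left_integral {k : Type*} [Field k] [CharZero k]
    {F : Type*} {G : Type*} [Group F] [Group G] [Fintype G] [DecidableEq F]
    (tri : G → F → F) (coa : G → F → G)
    (h1 : ∀ f : F, tri 1 f = f)
    (h2 : ∀ (g g' : G) (f : F), tri (g * g') f = tri g (tri g' f))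
    (h3 : ∀ g : G, coa g 1 = g)
    (h4 : ∀ (g : G) (f f' : F), coa g (f * f') = coa (coa g f) f')
    (h5 : ∀ (g : G) (f f' : F), tri g (f * f') = tri g f * tri (coa g f) f')
    (h6 : ∀ (g g' : G) (f : F), coa (g * g') f = coa g (tri g' f) * coa g' f)
    (τ : G → G → F → kˣ)
    (hτ1 : ∀ (g : G) (f : F), τ 1 g f = 1)
    (hτ2 : ∀ (g : G) (f : F), τ g 1 f = 1)
    (hτ3 : ∀ g g' : G, τ g g' 1 = 1)
    (hτ4 : ∀ (g g' g'' : G) (f : F),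
      τ g g' (tri g'' f) * τ (g * g') g'' f = τ g (g' * g'') f * τ g' g'' f) :
    (∀ (g : G) (f : F),
      ∑ x : G, ((τ (g * x⁻¹) x f : k) * cpT (Finsupp.single (x, f) (1 : k))) •
          Finsupp.single ((g * x⁻¹, tri x f)) (1 : k) =
        cpT (Finsupp.single (g, f) (1 : k)) • (cpOne : (G × F) →₀ k)) ∧
    cpT (cpOne : (G × F) →₀ k) = 1 := by
  have hn : (Fintype.card G : k) ≠ 0 := Nat.cast_ne_zero.mpr Fintype.card_ne_zero
  have htri1 : ∀ x : G, tri x 1 = 1 := by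
    intro x
    have := h5 x 1 1
    rw [mul_one, h3] at this
    nth_rewrite 1 [← mul_one (tri x 1)] at this
    exact (mul_left_cancel this).symm
  constructor
  · intro g f
    by_cases hf : f = 1
    · subst hf
      have : ∀ x : G, ((τ (g * x⁻¹) x 1 : k) * cpT (Finsupp.single (x, (1:F)) (1 : k))) •
          Finsupp.single ((g * x⁻¹, tri x 1)) (1 : k)
          = ((Fintype.card G : k)⁻¹) • Finsupp.single ((g * x⁻¹, (1:F))) (1 : k) := by
        intro x
        rw [hτ3, htri1, cpT_single]
        simp [div_eq_mul_inv]
      rw [Finset.sum_congr rfl fun x _ => this x, cpT_single]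
      simp only [ite_true, one_div]
      rw [cpOne, Finset.smul_sum]
      exact Fintype.sum_equiv ((Equiv.inv G).trans (Equiv.mulLeft g)) _ _ (fun x => rfl)
    · rw [cpT_single]
      simp only [hf, if_false, zero_smul]
      apply Finset.sum_eq_zero
      intro x _
      rw [cpT_single]
      simp [hf]
  · have hadd : ∀ a b : (G × F) →₀ k, cpT (a + b) = cpT a + cpT b := fun a b => by
      unfold cpT
      rw [Finsupp.sum_add_index' (fun p => by simp) (fun p c d => by split <;> simp [add_div])]
    have hmap := map_sum (AddMonoidHom.mk' cpT hadd)
      (fun g : G => Finsupp.single (g, (1:F)) (1:k)) Finset.univ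
    simp only [AddMonoidHom.mk'_apply] at hmap
    rw [cpOne, hmap]
    have : ∀ g : G, cpT (Finsupp.single (g, (1:F)) (1:k)) = 1 / (Fintype.card G : k) :=
      fun g => by rw [cpT_single]; simp
    simp only [AddMonoidHom.mk'_apply, this]
    simp [hn]
end
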